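/- arXiv:2502.15410 — 2 statements merged into one kernel-verified Lean document; each statement's English description precedes it below -/
import Mathlib

section
/- If a framework (G,p) has an extensive self-stress ω, then every self-stress of (G,p) is a scalar multiple of ω; i.e., the space of self-stresses of (G,p) is one-dimensional. -/
open scoped BigOperators

/-- A self-stress of the framework `(G, p)`: a symmetric edge-weighting vanishing on
non-edges and in equilibrium at every vertex. -/
def IsSelfStress {n d : ℕ} (G : SimpleGraph (Fin n)) (p : Fin n → EuclideanSpace ℝ (Fin d))
    (ω : Fin n → Fin n → ℝ) : Prop :=
  (∀ i j, ω i j = ω j i) ∧ (∀ i j, ¬ G.Adj i j → ω i j = 0) ∧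
    ∀ i, ∑ j, ω i j • (p i - p j) = 0

/-- `ω` is nonzero on every edge of `G`. -/
def HasFullSupport {n : ℕ} (G : SimpleGraph (Fin n)) (ω : Fin n → Fin n → ℝ) : Prop :=
  ∀ i j, G.Adj i j → ω i j ≠ 0

/-- An extensive self-stress: full support and not a linear combination of self-stresses
whose supports are proper subsets of the edge set. -/
def IsExtensive {n d : ℕ} (G : SimpleGraph (Fin n)) (p : Fin n → EuclideanSpace ℝ (Fin d))
    (ω : Fin n → Fin n → ℝ) : Prop :=
  IsSelfStress G p ω ∧ HasFullSupport G ω ∧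
    ω ∉ Submodule.span ℝ {ω' : Fin n → Fin n → ℝ | IsSelfStress G p ω' ∧ ¬ HasFullSupport G ω'}

lemma selfStress_sub_smul {n d : ℕ} {G : SimpleGraph (Fin n)}
    {p : Fin n → EuclideanSpace ℝ (Fin d)} {ω τ : Fin n → Fin n → ℝ}
    (hω : IsSelfStress G p ω) (hτ : IsSelfStress G p τ) (c : ℝ) :
    IsSelfStress G p (ω - c • τ) := by
  obtain ⟨hs, hz, he⟩ := hω
  obtain ⟨hs', hz', he'⟩ := hτ
  refine ⟨fun i j => by simp [hs i j, hs' i j],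
    fun i j h => by simp [hz i j h, hz' i j h], fun i => ?_⟩
  have : ∑ j, ((ω - c • τ) i j) • (p i - p j)
      = (∑ j, ω i j • (p i - p j)) - c • ∑ j, τ i j • (p i - p j) := by
    rw [Finset.smul_sum, ← Finset.sum_sub_distrib]
    refine Finset.sum_congr rfl fun j _ => ?_
    simp [sub_smul, smul_smul]
  rw [this, he i, he' i, smul_zero, sub_zero]

/-- A self-stress without full support is zero, when an extensive self-stress exists. -/
lemma selfStress_not_full_eq_zero {n d : ℕ} {G : SimpleGraph (Fin n)}
    {p : Fin n → EuclideanSpace ℝ (Fin d)} {ω : Fin n → Fin n → ℝ}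
    (hω : IsExtensive G p ω) {τ : Fin n → Fin n → ℝ}
    (hτ : IsSelfStress G p τ) (hns : ¬ HasFullSupport G τ) : τ = 0 := by
  by_contra h
  obtain ⟨i, hi⟩ := Function.ne_iff.mp h
  obtain ⟨j, hij⟩ := Function.ne_iff.mp hi
  have hτij : τ i j ≠ 0 := hij
  have hadj : G.Adj i j := by
    by_contra hA
    exact hτij (hτ.2.1 i j hA)
  set a : ℝ := ω i j / τ i j with ha
  have hσ : IsSelfStress G p (ω - a • τ) := selfStress_sub_smul hω.1 hτ a
  have hσns : ¬ HasFullSupport G (ω - a • τ) := by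
    intro hfull
    apply hfull i j hadj
    simp [ha, div_mul_cancel₀ _ hτij]
  set S := {ω' : Fin n → Fin n → ℝ | IsSelfStress G p ω' ∧ ¬ HasFullSupport G ω'}
  have hmem1 : (ω - a • τ) ∈ Submodule.span ℝ S := Submodule.subset_span ⟨hσ, hσns⟩
  have hmem2 : τ ∈ Submodule.span ℝ S := Submodule.subset_span ⟨hτ, hns⟩
  have : ω ∈ Submodule.span ℝ S := by
    have := Submodule.add_mem _ hmem1 (Submodule.smul_mem _ a hmem2)
    simpa using this
  exact hω.2.2 this

/-- if a framework has an extensive self-stress, every self-stress is a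
scalar multiple of it (the self-stress space is one-dimensional). -/
theorem extensive_unique_selfStress {n d : ℕ} (G : SimpleGraph (Fin n))
    (p : Fin n → EuclideanSpace ℝ (Fin d)) (ω : Fin n → Fin n → ℝ)
    (hω : IsExtensive G p ω) :
    ∀ ω' : Fin n → Fin n → ℝ, IsSelfStress G p ω' → ∃ c : ℝ, ω' = c • ω := by
  intro ω' hω'
  by_cases hE : ∃ i j, G.Adj i j
  · obtain ⟨i, j, hadj⟩ := hE
    have hωij : ω i j ≠ 0 := hω.2.1 i j hadj
    refine ⟨ω' i j / ω i j, ?_⟩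
    have hτ : IsSelfStress G p (ω' - (ω' i j / ω i j) • ω) :=
      selfStress_sub_smul hω' hω.1 _
    have hns : ¬ HasFullSupport G (ω' - (ω' i j / ω i j) • ω) := by
      intro hfull
      apply hfull i j hadj
      simp [div_mul_cancel₀ _ hωij]
    exact sub_eq_zero.mp (selfStress_not_full_eq_zero hω hτ hns)
  · -- no edges: every self-stress is zero
    refine ⟨0, ?_⟩
    funext i j
    have : ω' i j = 0 := hω'.2.1 i j (fun h => hE ⟨i, j, h⟩)
    simp [this]
end

section
/- Let (G,p) be a framework in ℝ^d with the property that for every edge e of G, the graph G − e can be reduced to the empty graph by repeatedly deleting vertices of degree at most d, and such that for every vertex i of G with degree at most d in any subgraph arising in this peeling process, the edge-direction vectors p_i − p_j for neighbours j are linearly independent. Then every nonzero self-stress of (G,p) has full support. -/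
open scoped BigOperators

/-- if for every edge e the graph G − e can be peeled to the empty graph by
repeatedly deleting vertices of degree at most d (encoded by a removal ordering σ in which
every vertex has at most d later neighbours in G − e), and at each peeling step the edge
directions to the remaining (later) neighbours are linearly independent, then every nonzero
self-stress of (G,p) has full support. -/
theorem peeling_implies_full_support {n d : ℕ} (G : SimpleGraph (Fin n))
    (p : Fin n → EuclideanSpace ℝ (Fin d))
    (hpeel : ∀ a b : Fin n, G.Adj a b →
      ∃ σ : Equiv.Perm (Fin n),
        ∀ k : Fin n,
          {j : Fin n | (G.deleteEdges {s(a, b)}).Adj (σ k) (σ j) ∧ k < j}.ncard ≤ d ∧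
          LinearIndependent ℝ
            (fun j : {j : Fin n // (G.deleteEdges {s(a, b)}).Adj (σ k) (σ j) ∧ k < j} =>
              p (σ k) - p (σ (j : Fin n)))) :
    ∀ ω : Fin n → Fin n → ℝ, IsSelfStress G p ω → ω ≠ 0 → HasFullSupport G ω := by
  classical
  intro ω hω hne
  by_contra hfs
  exfalso
  apply hne
  simp only [HasFullSupport, not_forall] at hfs
  obtain ⟨a, b, hab, hab0⟩ := hfs
  rw [not_ne_iff] at hab0
  obtain ⟨σ, hσ⟩ := hpeel a b hab
  obtain ⟨hsym, hvan, heq⟩ := hω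
  set G' := G.deleteEdges {s(a, b)} with hG'
  have hvan' : ∀ i j, ¬ G'.Adj i j → ω i j = 0 := by
    intro i j hnadj
    by_cases h : G.Adj i j
    · have : s(i, j) ∈ ({s(a, b)} : Set (Sym2 (Fin n))) := by
        by_contra hmem
        exact hnadj (by simp [hG', SimpleGraph.deleteEdges_adj, h, hmem])
      simp only [Set.mem_singleton_iff, Sym2.eq_iff] at this
      rcases this with ⟨rfl, rfl⟩ | ⟨rfl, rfl⟩
      · exact hab0
      · rw [hsym]; exact hab0
    · exact hvan i j h
  have keyaux : ∀ m : ℕ, ∀ k : Fin n, (k : ℕ) < m → ∀ j : Fin n, ω (σ k) (σ j) = 0 := by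
    intro m
    induction m with
    | zero => intro k hk; omega
    | succ m IHm =>
    intro k hk
    have IH : ∀ j : Fin n, j < k → ∀ j' : Fin n, ω (σ j) (σ j') = 0 := by
      intro j hjk
      exact IHm j (by omega)
    have hzero_off : ∀ j : Fin n, ¬ (G'.Adj (σ k) (σ j) ∧ k < j) → ω (σ k) (σ j) = 0 := by
      intro j hj
      by_cases hadj : G'.Adj (σ k) (σ j)
      · have hjk : j < k := by
          rcases lt_trichotomy j k with h | h | h
          · exact h
          · exact absurd hadj (by simp [h])
          · exact absurd ⟨hadj, h⟩ hj
        rw [hsym]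
        exact IH j hjk k
      · exact hvan' _ _ hadj
    have hsum : ∑ j : Fin n, ω (σ k) (σ j) • (p (σ k) - p (σ j)) = 0 := by
      rw [Equiv.sum_comp σ (fun x => ω (σ k) x • (p (σ k) - p x))]
      exact heq (σ k)
    have h2 : ∑ a ∈ Finset.univ.filter (fun j => G'.Adj (σ k) (σ j) ∧ k < j),
          ω (σ k) (σ a) • (p (σ k) - p (σ a))
        = ∑ j : {j : Fin n // G'.Adj (σ k) (σ j) ∧ k < j},
          ω (σ k) (σ (j : Fin n)) • (p (σ k) - p (σ (j : Fin n))) :=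
      Finset.sum_subtype _ (by intro x; simp) _
    have hsub : ∑ j : {j : Fin n // G'.Adj (σ k) (σ j) ∧ k < j},
        ω (σ k) (σ (j : Fin n)) • (p (σ k) - p (σ (j : Fin n))) = 0 := by
      rw [← h2, Finset.sum_filter_of_ne, hsum]
      intro x _ hx
      by_contra hc
      exact hx (by rw [hzero_off x hc, zero_smul])
    have hli := (hσ k).2
    rw [Fintype.linearIndependent_iff] at hli
    have hlater := hli (fun j => ω (σ k) (σ (j : Fin n))) hsub
    intro j
    by_cases hc : G'.Adj (σ k) (σ j) ∧ k < j
    · exact hlater ⟨j, hc⟩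
    · exact hzero_off j hc
  have key : ∀ k j : Fin n, ω (σ k) (σ j) = 0 := fun k => keyaux ((k : ℕ) + 1) k (by omega)
  funext i j
  have h := key (σ.symm i) (σ.symm j)
  simpa using h
end
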